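/- For each integer m ≥ 0 there exists a constant C > 0 such that for all λ ∈ (0,1), all b ∈ ℝ, and all p ∈ ℝ with |p| ≤ b ≤ λ^{-1}, one has ∫_{|p'| ≥ b} (|p'| − b)^m · 𝒥_λ(p,p') dp' ≤ C · ∫_{|p'| ≥ b} 𝒥_λ(p,p') dp'. -/

import Mathlib

open MeasureTheory Real

/-- The jump rate kernel `𝒥_λ(p,p')`. -/
noncomputable def Jker (lam p p' : ℝ) : ℝ :=
  ((1 + lam) / 64) * |p' - p| *
    Real.exp (-(1/2) * ((1 - lam)/2 * p - (1 + lam)/2 * p')^2)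

/-- The Hamiltonian `H(x,p) = p²/2 + V(x)`. -/
noncomputable def Ham (V : ℝ → ℝ) (x p : ℝ) : ℝ := p^2 / 2 + V x

/-!
On the half-line `p' = b + s`, `s ≥ 0`, the kernel reads
`𝒥_λ(p, b + s) = (1+λ)/64 · (s + b - p) · exp(-(z + d s)²/2)` with `d = (1+λ)/2 ≥ 1/2` and
`z = d b - (1-λ)/2 · p ≥ 0`. Halving `s` inside the Gaussian gains at least a factor
`exp(3 d² s² / 8)`, which absorbs `s^m ≤ m! eˢ`; hence
`(p' - b)^m 𝒥_λ(p,p') ≤ 2 m! e^{8/3} 𝒥_λ(p, (p'+b)/2)`, and the substitution `p' ↦ (p'+b)/2`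
costs one more factor `2`. The half-line `p' ≤ -b` is the same one with `p` replaced by `-p`.
-/

open Set
open scoped Nat

lemma setIntegral_Ioi_comp_half_add (f : ℝ → ℝ) (b : ℝ) :
    ∫ x in Ioi b, f ((x + b) / 2) = 2 * ∫ x in Ioi b, f x := by
  have hind : ∀ x, (Ioi b).indicator (fun x => f ((x + b) / 2)) x
      = (Ioi b).indicator f ((x + b) / 2) := fun x => by
    by_cases hx : b < x
    · rw [indicator_of_mem (show x ∈ Ioi b from hx),
        indicator_of_mem (show (x + b) / 2 ∈ Ioi b from by rw [mem_Ioi]; linarith)]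
    · rw [indicator_of_notMem (show x ∉ Ioi b from hx),
        indicator_of_notMem (show (x + b) / 2 ∉ Ioi b from by rw [mem_Ioi]; linarith)]
  rw [← integral_indicator measurableSet_Ioi, ← integral_indicator measurableSet_Ioi]
  simp_rw [hind]
  rw [integral_add_right_eq_self (fun y => (Ioi b).indicator f (y / 2)) b,
    Measure.integral_comp_div, abs_two, smul_eq_mul]

lemma setIntegral_le_abs_eq (f : ℝ → ℝ) {b : ℝ} (hb : 0 ≤ b) (hf : IntegrableOn f (Ioi b))
    (hf_neg : IntegrableOn (fun q => f (-q)) (Ioi b)) :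
    ∫ q in {q | b ≤ |q|}, f q = (∫ q in Ioi b, f q) + ∫ q in Ioi b, f (-q) := by
  have hsplit : {q : ℝ | b ≤ |q|} = Iic (-b) ∪ Ici b := by
    ext q
    simp only [mem_ofPred_eq, mem_union, mem_Iic, mem_Ici, le_abs, le_neg]
    tauto
  have hdisj : AEDisjoint volume (Iic (-b)) (Ici b) := by
    rw [AEDisjoint, Iic_inter_Ici, Real.volume_Icc, ENNReal.ofReal_eq_zero]
    linarith
  have hf_Iic : IntegrableOn f (Iic (-b)) := by
    have hf_neg' : IntegrableOn (fun q => f (-q)) (Ici (- -b)) := by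
      rw [neg_neg]
      exact (integrableOn_Ici_iff_integrableOn_Ioi (by finiteness)).2 hf_neg
    simpa using hf_neg'.comp_neg_Iic
  rw [hsplit, setIntegral_union₀ hdisj measurableSet_Ici.nullMeasurableSet hf_Iic
    ((integrableOn_Ici_iff_integrableOn_Ioi (by finiteness)).2 hf), integral_Ici_eq_integral_Ioi,
    ← integral_comp_neg_Ioi, add_comm]

lemma Jker_neg_right (lam p q : ℝ) : Jker lam p (-q) = Jker lam (-p) q := by
  rw [Jker, Jker, show -q - p = -(q - -p) by ring, abs_neg]
  ring_nf

lemma continuous_Jker (lam p : ℝ) : Continuous (Jker lam p) := by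
  unfold Jker
  fun_prop

lemma Jker_nonneg {lam : ℝ} (hlam : -1 ≤ lam) (p q : ℝ) : 0 ≤ Jker lam p q := by
  unfold Jker
  have : 0 ≤ 1 + lam := by linarith
  positivity

lemma integrable_Jker {lam : ℝ} (hlam : -1 < lam) (p : ℝ) : Integrable (Jker lam p) := by
  set a := (1 - lam) / 2 * p
  set d := (1 + lam) / 2
  have hd : 0 < d ^ 2 / 4 := by
    have : 0 < d := by linarith [show d = (1 + lam) / 2 from rfl]
    positivity
  have hG : Integrable fun q => (|q| + |p|) * exp (-(d ^ 2 / 4) * q ^ 2) :=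
    ((integrable_mul_exp_neg_mul_sq hd).norm.add
      ((integrable_exp_neg_mul_sq hd).const_mul |p|)).congr
      (Filter.Eventually.of_forall fun q => by simp [add_mul])
  refine (hG.const_mul ((1 + lam) / 64 * exp (a ^ 2 / 2))).mono'
    (continuous_Jker lam p).aestronglyMeasurable (Filter.Eventually.of_forall fun q => ?_)
  rw [norm_of_nonneg (Jker_nonneg hlam.le p q)]
  -- `(a - d q)² ≥ d² q² / 2 - a²`, since the difference is `2 (a - d q / 2)²`
  have hexp :
      exp (-(1/2) * (a - d * q) ^ 2) ≤ exp (a ^ 2 / 2) * exp (-(d ^ 2 / 4) * q ^ 2) := by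
    rw [← exp_add]
    exact exp_le_exp.2 (by nlinarith [sq_nonneg (a - d * q / 2)])
  have hK : 0 ≤ (1 + lam) / 64 := by linarith
  calc (1 + lam) / 64 * |q - p| * exp (-(1/2) * (a - d * q) ^ 2)
      ≤ (1 + lam) / 64 * (|q| + |p|) * (exp (a ^ 2 / 2) * exp (-(d ^ 2 / 4) * q ^ 2)) := by
        gcongr
        exact abs_sub _ _
    _ = _ := by ring

lemma pow_mul_exp_neg_sq_le (n : ℕ) {z d s : ℝ} (hz : 0 ≤ z) (hd : 1 / 2 ≤ d) (hs : 0 ≤ s) :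
    s ^ n * exp (-(1/2) * (z + d * s) ^ 2) ≤
      n ! * exp (8/3) * exp (-(1/2) * (z + d * (s / 2)) ^ 2) := by
  have hpow : s ^ n ≤ n ! * exp s := by
    have := pow_div_factorial_le_exp s hs n
    rwa [div_le_iff₀ (by positivity), mul_comm] at this
  -- `s ≤ 8/3 + 3 s² / 32` is `(s - 16/3)² ≥ 0`
  have hexp : s + -(1/2) * (z + d * s) ^ 2 ≤ 8/3 + -(1/2) * (z + d * (s / 2)) ^ 2 := by
    nlinarith [sq_nonneg (s - 16/3), mul_nonneg (mul_nonneg hz (by linarith : (0:ℝ) ≤ d)) hs,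
      mul_nonneg (mul_nonneg (by linarith : (0:ℝ) ≤ d - 1/2) (by linarith : (0:ℝ) ≤ d + 1/2))
        (sq_nonneg s)]
  calc s ^ n * exp (-(1/2) * (z + d * s) ^ 2)
      ≤ n ! * exp s * exp (-(1/2) * (z + d * s) ^ 2) := by gcongr
    _ = n ! * exp (s + -(1/2) * (z + d * s) ^ 2) := by rw [exp_add]; ring
    _ ≤ n ! * exp (8/3 + -(1/2) * (z + d * (s / 2)) ^ 2) := by gcongr
    _ = n ! * exp (8/3) * exp (-(1/2) * (z + d * (s / 2)) ^ 2) := by rw [exp_add]; ring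

lemma pow_mul_Jker_le (n : ℕ) {lam p b q : ℝ} (hlam : 0 ≤ lam) (hp : |p| ≤ b) (hq : b ≤ q) :
    (q - b) ^ n * Jker lam p q ≤ 2 * n ! * exp (8/3) * Jker lam p ((q + b) / 2) := by
  obtain ⟨hp₁, hp₂⟩ := abs_le.1 hp
  set K := (1 + lam) / 64
  set d := (1 + lam) / 2
  set z := d * b - (1 - lam) / 2 * p
  have hz : 0 ≤ z := by
    simp only [z, d]
    nlinarith [mul_nonneg hlam (by linarith : 0 ≤ b + p)]
  have hshift : ∀ t, 0 ≤ t →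
      Jker lam p (b + t) = K * (t + (b - p)) * exp (-(1/2) * (z + d * t) ^ 2) := fun t ht => by
      rw [Jker, abs_of_nonneg (by linarith)]
      simp only [K, d, z]
      ring_nf
  set s := q - b
  have hs : 0 ≤ s := by linarith
  rw [show q = b + s by ring, show (b + s + b) / 2 = b + s / 2 by ring, hshift s hs,
    hshift (s / 2) (by linarith)]
  have hK : 0 ≤ K := by positivity
  have hmain := pow_mul_exp_neg_sq_le n hz (d := d) (by simp only [d]; linarith) hs
  calc s ^ n * (K * (s + (b - p)) * exp (-(1/2) * (z + d * s) ^ 2))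
      = K * (s + (b - p)) * (s ^ n * exp (-(1/2) * (z + d * s) ^ 2)) := by ring
    _ ≤ K * (2 * (s / 2 + (b - p))) *
          (n ! * exp (8/3) * exp (-(1/2) * (z + d * (s / 2)) ^ 2)) := by
        gcongr
        linarith
    _ = _ := by ring

lemma integrable_Jker_comp_half_add {lam : ℝ} (hlam : -1 < lam) (p b : ℝ) :
    Integrable fun q => Jker lam p ((q + b) / 2) :=
  ((integrable_Jker hlam p).comp_div two_ne_zero).comp_add_right b

lemma integrableOn_pow_mul_Jker (n : ℕ) {lam p b : ℝ} (hlam : 0 ≤ lam) (hp : |p| ≤ b) :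
    IntegrableOn (fun q => (|q| - b) ^ n * Jker lam p q) (Ioi b) := by
  have hb : 0 ≤ b := (abs_nonneg p).trans hp
  have hcont : Continuous fun q => (|q| - b) ^ n * Jker lam p q := by
    have := continuous_Jker lam p
    fun_prop
  refine ((integrable_Jker_comp_half_add (show -1 < lam by linarith) p b).const_mul
    (2 * n ! * exp (8/3))).integrableOn.mono' hcont.aestronglyMeasurable.restrict ?_
  filter_upwards [ae_restrict_mem measurableSet_Ioi] with q hq
  have hq : b ≤ q := le_of_lt hq
  rw [abs_of_nonneg (by linarith : 0 ≤ q), norm_of_nonneg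
    (mul_nonneg (pow_nonneg (by linarith) n) (Jker_nonneg (by linarith) p q))]
  exact pow_mul_Jker_le n hlam hp hq

lemma setIntegral_Ioi_pow_mul_Jker_le (n : ℕ) {lam p b : ℝ} (hlam : 0 ≤ lam) (hp : |p| ≤ b) :
    ∫ q in Ioi b, (|q| - b) ^ n * Jker lam p q
      ≤ 4 * n ! * exp (8/3) * ∫ q in Ioi b, Jker lam p q := by
  have hb : 0 ≤ b := (abs_nonneg p).trans hp
  calc ∫ q in Ioi b, (|q| - b) ^ n * Jker lam p q
      ≤ ∫ q in Ioi b, 2 * n ! * exp (8/3) * Jker lam p ((q + b) / 2) := by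
        refine setIntegral_mono_on (integrableOn_pow_mul_Jker n hlam hp)
          ((integrable_Jker_comp_half_add (show -1 < lam by linarith) p b).const_mul _).integrableOn
          measurableSet_Ioi fun q hq => ?_
        rw [abs_of_nonneg (by linarith [mem_Ioi.1 hq])]
        exact pow_mul_Jker_le n hlam hp (le_of_lt hq)
    _ = 4 * n ! * exp (8/3) * ∫ q in Ioi b, Jker lam p q := by
        rw [integral_const_mul, setIntegral_Ioi_comp_half_add (Jker lam p)]
        ring

theorem stmt7 (m : ℕ) :
    ∃ C > 0, ∀ lam ∈ Set.Ioo (0:ℝ) 1, ∀ b p : ℝ, |p| ≤ b → b ≤ lam⁻¹ →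
      (∫ p' in {q : ℝ | b ≤ |q|}, (|p'| - b) ^ m * Jker lam p p') ≤
        C * ∫ p' in {q : ℝ | b ≤ |q|}, Jker lam p p' := by
  refine ⟨4 * m ! * exp (8/3), by positivity, ?_⟩
  rintro lam ⟨hlam, -⟩ b p hp -
  have hb : 0 ≤ b := (abs_nonneg p).trans hp
  have hp_neg : |-p| ≤ b := by rwa [abs_neg]
  have hJ : Integrable (Jker lam p) := integrable_Jker (by linarith) p
  rw [setIntegral_le_abs_eq _ hb (integrableOn_pow_mul_Jker m hlam.le hp)
      (by simpa only [abs_neg, Jker_neg_right] using integrableOn_pow_mul_Jker m hlam.le hp_neg),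
    setIntegral_le_abs_eq _ hb hJ.integrableOn (hJ.comp_neg).integrableOn]
  simp only [abs_neg, Jker_neg_right]
  rw [mul_add]
  exact add_le_add (setIntegral_Ioi_pow_mul_Jker_le m hlam.le hp)
    (setIntegral_Ioi_pow_mul_Jker_le m hlam.le hp_neg)
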